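/- arXiv:2506.07613 — 2 statements merged into one kernel-verified Lean document; each statement's English description precedes it below -/
import Mathlib

section
/- Let T : [0,1] → [0,1] be measure-preserving with respect to Lebesgue measure m, and let L be the transfer operator of T with respect to m. If ψ ∈ L^∞([0,1]) satisfies Lψ = 0 and ψ ≠ 0, then for any z ∈ ℂ with |z| < 1 the function h_z = Σ_{ℓ=0}^∞ z^ℓ ψ∘T^ℓ converges in L^p for every p ∈ [1,∞], is nonzero, and satisfies L h_z = z h_z. -/
/-!
The series `h_z = ∑ z^ℓ ψ ∘ T^ℓ` converges uniformly off a null set (`ψ` is essentially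
bounded and `|z| < 1`) and satisfies `h_z = ψ + z · (h_z ∘ T)`. Since `L (φ ∘ T) = φ` for
every `φ ∈ L¹` and `L ψ = 0`, applying `L` to this functional equation gives `L h_z = z h_z`;
and `h_z = 0` would force `ψ = h_z - z · (h_z ∘ T) = 0`.
-/

open Set MeasureTheory Filter Topology
open scoped ENNReal

noncomputable def μ01 : Measure ℝ := volume.restrict (Icc (0 : ℝ) 1)

instance : IsProbabilityMeasure μ01 := ⟨by simp [μ01]⟩

section MeasurePreserving

variable {α E : Type*} [MeasurableSpace α] [NormedAddCommGroup E] {μ : Measure α} {T : α → α}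

lemma MeasureTheory.MemLp.exists_ae_norm_le {f : α → E} (hf : MemLp f ⊤ μ) :
    ∃ C : ℝ, ∀ᵐ x ∂μ, ‖f x‖ ≤ C := by
  have hf' : eLpNormEssSup f μ < ⊤ := by rw [← eLpNorm_exponent_top]; exact hf.2
  obtain ⟨C, hC⟩ := eLpNormEssSup_lt_top_iff_isBoundedUnder.1 hf'
  exact ⟨C, (eventually_map.1 hC).mono fun x hx => by exact_mod_cast hx⟩

lemma MeasureTheory.MeasurePreserving.ae_forall_iterate (hT : MeasurePreserving T μ μ)
    {p : α → Prop} (hp : ∀ᵐ x ∂μ, p x) : ∀ᵐ x ∂μ, ∀ ℓ : ℕ, p (T^[ℓ] x) :=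
  ae_all_iff.2 fun ℓ => (hT.iterate ℓ).quasiMeasurePreserving.ae hp

variable [NormedSpace ℝ E]

lemma MeasureTheory.MeasurePreserving.integral_comp_of_aestronglyMeasurable
    (hT : MeasurePreserving T μ μ) {f : α → E} (hf : AEStronglyMeasurable f μ) :
    ∫ x, f (T x) ∂μ = ∫ x, f x ∂μ := by
  rw [← integral_map hT.aemeasurable (by rwa [hT.map_eq]), hT.map_eq]

end MeasurePreserving

section GeometricSeries

variable {𝕜 : Type*} [NormedField 𝕜] {z : 𝕜} {a : ℕ → 𝕜} {C : ℝ}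

lemma norm_pow_mul_le (ha : ∀ ℓ, ‖a ℓ‖ ≤ C) (ℓ : ℕ) : ‖z ^ ℓ * a ℓ‖ ≤ C * ‖z‖ ^ ℓ := by
  rw [norm_mul, norm_pow, mul_comm]
  exact mul_le_mul_of_nonneg_right (ha ℓ) (by positivity)

lemma norm_tsum_pow_mul_le (hz : ‖z‖ < 1) (ha : ∀ ℓ, ‖a ℓ‖ ≤ C) :
    ‖∑' ℓ, z ^ ℓ * a ℓ‖ ≤ C / (1 - ‖z‖) :=
  tsum_of_norm_bounded ((hasSum_geometric_of_lt_one (norm_nonneg z) hz).mul_left C)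
    (norm_pow_mul_le ha)

variable [CompleteSpace 𝕜]

lemma summable_pow_mul_of_norm_le (hz : ‖z‖ < 1) (ha : ∀ ℓ, ‖a ℓ‖ ≤ C) :
    Summable fun ℓ => z ^ ℓ * a ℓ :=
  .of_norm_bounded ((summable_geometric_of_lt_one (norm_nonneg z) hz).mul_left C)
    (norm_pow_mul_le ha)

lemma norm_tsum_pow_mul_sub_sum_range_le (hz : ‖z‖ < 1) (ha : ∀ ℓ, ‖a ℓ‖ ≤ C) (N : ℕ) :
    ‖∑' ℓ, z ^ ℓ * a ℓ - ∑ ℓ ∈ Finset.range N, z ^ ℓ * a ℓ‖ ≤ C * ‖z‖ ^ N / (1 - ‖z‖) := by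
  have htail : ∑' ℓ, z ^ ℓ * a ℓ - ∑ ℓ ∈ Finset.range N, z ^ ℓ * a ℓ =
      z ^ N * ∑' i, z ^ i * a (i + N) := by
    rw [← (summable_pow_mul_of_norm_le hz ha).sum_add_tsum_nat_add N, add_sub_cancel_left,
      ← tsum_mul_left]
    exact tsum_congr fun i => by ring
  calc _ = ‖z‖ ^ N * ‖∑' i, z ^ i * a (i + N)‖ := by rw [htail, norm_mul, norm_pow]
    _ ≤ ‖z‖ ^ N * (C / (1 - ‖z‖)) :=
      mul_le_mul_of_nonneg_left (norm_tsum_pow_mul_le hz fun i => ha (i + N)) (by positivity)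
    _ = C * ‖z‖ ^ N / (1 - ‖z‖) := by ring

end GeometricSeries

section OrbitSeries

variable {α 𝕜 : Type*} [NormedField 𝕜] {T : α → α} {ψ : α → 𝕜} {z : 𝕜}

noncomputable def orbitSeries (T : α → α) (ψ : α → 𝕜) (z : 𝕜) (x : α) : 𝕜 :=
  ∑' ℓ : ℕ, z ^ ℓ * ψ (T^[ℓ] x)

lemma orbitSeries_eq_add_mul_orbitSeries {x : α}
    (hx : Summable fun ℓ => z ^ ℓ * ψ (T^[ℓ] x)) :
    orbitSeries T ψ z x = ψ x + z * orbitSeries T ψ z (T x) := by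
  rw [orbitSeries, hx.tsum_eq_zero_add, orbitSeries, ← tsum_mul_left]
  simp only [pow_zero, one_mul, Function.iterate_zero_apply, Function.iterate_succ_apply,
    pow_succ', mul_assoc]

variable [MeasurableSpace α] {μ : Measure α}

lemma ae_eq_zero_of_ae_eq_add_mul_comp (hT : MeasurePreserving T μ μ) {F : α → 𝕜}
    (hFψ : ∀ᵐ x ∂μ, F x = ψ x + z * F (T x)) (hF : F =ᵐ[μ] 0) : ψ =ᵐ[μ] 0 := by
  filter_upwards [hFψ, hF, hT.quasiMeasurePreserving.ae hF] with x hx hFx hFTx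
  rw [hFx, hFTx] at hx
  simpa using hx.symm

variable [CompleteSpace 𝕜] {C : ℝ} (hT : MeasurePreserving T μ μ)
  (hψ : ∀ᵐ x ∂μ, ‖ψ x‖ ≤ C) (hz : ‖z‖ < 1)
include hT hψ hz

lemma ae_orbitSeries_eq_add_mul_orbitSeries :
    ∀ᵐ x ∂μ, orbitSeries T ψ z x = ψ x + z * orbitSeries T ψ z (T x) := by
  filter_upwards [hT.ae_forall_iterate hψ] with x hx
  exact orbitSeries_eq_add_mul_orbitSeries (summable_pow_mul_of_norm_le hz hx)

lemma ae_norm_orbitSeries_sub_sum_range_le (N : ℕ) :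
    ∀ᵐ x ∂μ, ‖orbitSeries T ψ z x - ∑ ℓ ∈ Finset.range N, z ^ ℓ * ψ (T^[ℓ] x)‖ ≤
      C * ‖z‖ ^ N / (1 - ‖z‖) := by
  filter_upwards [hT.ae_forall_iterate hψ] with x hx
  exact norm_tsum_pow_mul_sub_sum_range_le hz hx N

lemma aestronglyMeasurable_orbitSeries (hψm : AEStronglyMeasurable ψ μ) :
    AEStronglyMeasurable (orbitSeries T ψ z) μ := by
  refine aestronglyMeasurable_of_tendsto_ae atTop
    (f := fun N x => ∑ ℓ ∈ Finset.range N, z ^ ℓ * ψ (T^[ℓ] x)) (fun N => ?_) ?_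
  · exact Finset.aestronglyMeasurable_fun_sum _ fun ℓ _ =>
      (hψm.comp_quasiMeasurePreserving (hT.iterate ℓ).quasiMeasurePreserving).const_mul _
  · filter_upwards [hT.ae_forall_iterate hψ] with x hx
    exact (summable_pow_mul_of_norm_le hz hx).hasSum.tendsto_sum_nat

lemma memLp_top_orbitSeries (hψm : AEStronglyMeasurable ψ μ) :
    MemLp (orbitSeries T ψ z) ⊤ μ :=
  memLp_top_of_bound (aestronglyMeasurable_orbitSeries hT hψ hz hψm) _ <| by
    simpa using ae_norm_orbitSeries_sub_sum_range_le hT hψ hz 0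

lemma tendsto_eLpNorm_orbitSeries_sub_sum_range [IsFiniteMeasure μ] (p : ℝ≥0∞) :
    Tendsto (fun N => eLpNorm (fun x => orbitSeries T ψ z x -
      ∑ ℓ ∈ Finset.range N, z ^ ℓ * ψ (T^[ℓ] x)) p μ) atTop (𝓝 0) := by
  have hbound : Tendsto (fun N : ℕ => ENNReal.ofReal (C * ‖z‖ ^ N / (1 - ‖z‖))) atTop (𝓝 0) := by
    simpa using ENNReal.tendsto_ofReal
      (((tendsto_pow_atTop_nhds_zero_of_lt_one (norm_nonneg z) hz).const_mul C).div_const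
        (1 - ‖z‖))
  have hconst : μ univ ^ p.toReal⁻¹ ≠ ∞ :=
    ENNReal.rpow_ne_top_of_nonneg (by positivity) (measure_ne_top μ univ)
  refine tendsto_of_tendsto_of_tendsto_of_le_of_le tendsto_const_nhds
    (by simpa using ENNReal.Tendsto.const_mul hbound (Or.inr hconst)) (fun N => zero_le)
    fun N => eLpNorm_le_of_ae_bound (ae_norm_orbitSeries_sub_sum_range_le hT hψ hz N)

end OrbitSeries

section TransferOperator

variable {α 𝕜 : Type*} [RCLike 𝕜] [MeasurableSpace α] {μ : Measure α}

lemma MeasureTheory.Lp.ext_of_forall_integral_mul_eq [SigmaFinite μ] {u v : Lp 𝕜 1 μ}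
    (h : ∀ g : α → 𝕜, MemLp g ⊤ μ → ∫ x, u x * g x ∂μ = ∫ x, v x * g x ∂μ) : u = v := by
  refine Lp.ext <| ae_eq_of_forall_setIntegral_eq_of_sigmaFinite
    (fun s _ _ => (L1.integrable_coeFn u).integrableOn)
    (fun s _ _ => (L1.integrable_coeFn v).integrableOn) fun s hs _ => ?_
  simpa [← indicator_mul_right, integral_indicator hs] using
    h (s.indicator 1) ((memLp_top_const 1).indicator hs)

def IsTransferOperator (μ : Measure α) (T : α → α) (L : Lp 𝕜 1 μ →L[𝕜] Lp 𝕜 1 μ) : Prop :=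
  ∀ (φ : Lp 𝕜 1 μ) (g : α → 𝕜), MemLp g ⊤ μ →
    ∫ x, (φ : α → 𝕜) x * g (T x) ∂μ = ∫ x, (L φ : α → 𝕜) x * g x ∂μ

namespace IsTransferOperator

variable [SigmaFinite μ] {T : α → α} {L : Lp 𝕜 1 μ →L[𝕜] Lp 𝕜 1 μ}
  (hL : IsTransferOperator μ T L) (hT : MeasurePreserving T μ μ)
include hL hT

lemma apply_toLp_comp {φ : α → 𝕜} (hφ : MemLp φ 1 μ) :
    L ((hφ.comp_measurePreserving hT).toLp (φ ∘ T)) = hφ.toLp φ := by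
  refine Lp.ext_of_forall_integral_mul_eq fun g hg => ?_
  have hφT := (hφ.comp_measurePreserving hT).coeFn_toLp
  calc ∫ x, L ((hφ.comp_measurePreserving hT).toLp (φ ∘ T)) x * g x ∂μ
      = ∫ x, φ (T x) * g (T x) ∂μ := by
        rw [← hL _ g hg]
        exact integral_congr_ae (hφT.mul (ae_eq_refl _))
    _ = ∫ x, φ x * g x ∂μ :=
        hT.integral_comp_of_aestronglyMeasurable
          (hφ.aestronglyMeasurable.mul hg.aestronglyMeasurable)
    _ = ∫ x, hφ.toLp φ x * g x ∂μ := integral_congr_ae (hφ.coeFn_toLp.symm.mul (ae_eq_refl _))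

lemma apply_eq_smul_of_ae_eq_add {F ψ : α → 𝕜} {z : 𝕜} (hF : MemLp F 1 μ) (hψ : MemLp ψ 1 μ)
    (hLψ : L (hψ.toLp ψ) = 0) (hFψ : ∀ᵐ x ∂μ, F x = ψ x + z * F (T x)) :
    L (hF.toLp F) = z • hF.toLp F := by
  have hFT := hF.comp_measurePreserving hT
  have hsplit : hF.toLp F = hψ.toLp ψ + z • hFT.toLp (F ∘ T) := by
    rw [← MemLp.toLp_const_smul, ← MemLp.toLp_add]
    exact MemLp.toLp_congr _ _ hFψ
  conv_lhs => rw [hsplit]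
  rw [map_add, map_smul, hLψ, hL.apply_toLp_comp hT hF, zero_add]

end IsTransferOperator

end TransferOperator

/-- Let `T` preserve Lebesgue measure on `[0,1]` and let `L` be its transfer operator
(characterised by the duality `∫ φ · (g ∘ T) = ∫ (Lφ) · g` for bounded `g`).  If
`ψ ∈ L^∞` satisfies `Lψ = 0` and `ψ ≠ 0`, then for `|z| < 1` the series
`h_z = ∑ z^ℓ ψ∘T^ℓ` converges in every `L^p`, `1 ≤ p ≤ ∞`, is nonzero, and satisfies
`L h_z = z h_z`. -/
theorem transfer_eigenfunction
    (T : ℝ → ℝ) (hT : MeasurePreserving T μ01 μ01)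
    (L : Lp ℂ 1 μ01 →L[ℂ] Lp ℂ 1 μ01)
    (hL : ∀ (φ : Lp ℂ 1 μ01) (g : ℝ → ℂ), MemLp g ⊤ μ01 →
      ∫ x, (φ : ℝ → ℂ) x * g (T x) ∂μ01 = ∫ x, (L φ : ℝ → ℂ) x * g x ∂μ01)
    (ψf : ℝ → ℂ) (hψtop : MemLp ψf ⊤ μ01) (hψ1 : MemLp ψf 1 μ01)
    (hψne : ¬ ψf =ᵐ[μ01] 0) (hLψ : L (hψ1.toLp ψf) = 0)
    (z : ℂ) (hz : ‖z‖ < 1) :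
    (∀ p : ℝ≥0∞, 1 ≤ p →
      MemLp (fun x => ∑' ℓ : ℕ, z ^ ℓ * ψf (T^[ℓ] x)) p μ01 ∧
      Tendsto (fun N => eLpNorm (fun x => (∑' ℓ : ℕ, z ^ ℓ * ψf (T^[ℓ] x)) -
        ∑ ℓ ∈ Finset.range N, z ^ ℓ * ψf (T^[ℓ] x)) p μ01) atTop (𝓝 0)) ∧
    ∃ h : Lp ℂ 1 μ01,
      (⇑h =ᵐ[μ01] fun x => ∑' ℓ : ℕ, z ^ ℓ * ψf (T^[ℓ] x)) ∧ h ≠ 0 ∧ L h = z • h := by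
  obtain ⟨C, hC⟩ := hψtop.exists_ae_norm_le
  have hFψ := ae_orbitSeries_eq_add_mul_orbitSeries hT hC hz
  have hF := memLp_top_orbitSeries hT hC hz hψtop.aestronglyMeasurable
  have hF1 := hF.mono_exponent (p := 1) le_top
  refine ⟨fun p _ => ⟨hF.mono_exponent le_top,
    tendsto_eLpNorm_orbitSeries_sub_sum_range hT hC hz p⟩, hF1.toLp _, hF1.coeFn_toLp, ?_,
    IsTransferOperator.apply_eq_smul_of_ae_eq_add hL hT hF1 hψ1 hLψ hFψ⟩
  rw [Ne, Lp.eq_zero_iff_ae_eq_zero]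
  exact fun h0 => hψne (ae_eq_zero_of_ae_eq_add_mul_comp hT hFψ (hF1.coeFn_toLp.symm.trans h0))
end

section
/- Let n be a natural pseudo-norm on a function space on [0,1], i.e. a finite sum n = Σ_{i≤j} n_i of purely natural pseudo-norms n_i with degrees of homogeneity t_i. Then the map t_max(φ) = max{t_i : n_i(φ) > 0} is constant on the family of indicator functions of nondegenerate subintervals of [0,1], and there exists C_1 ≥ 1 such that (1/C_1)|Q|^{−t_max} ≤ n(1_Q) ≤ C_1 |Q|^{−t_max} for all subintervals Q ⊂ [0,1]. -/
open Set

/-- A pseudo-norm `n` on functions on `[0,1]` is purely natural with degree of homogeneity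
`t` if there is `C > 0` such that for every invertible affine map `u x = c x + d` and every
`φ` with `u⁻¹(supp φ) ⊆ [0,1]` one has
`(1/C) |c|^t n(φ) ≤ n(φ ∘ u) ≤ C |c|^t n(φ)`. -/
def PurelyNatural (n : (ℝ → ℂ) → ℝ) (t : ℝ) : Prop :=
  ∃ C : ℝ, 0 < C ∧ ∀ (c d : ℝ) (φ : ℝ → ℂ), c ≠ 0 →
    (Function.support fun x => φ (c * x + d)) ⊆ Icc 0 1 →
    (1 / C) * |c| ^ t * n φ ≤ n (fun x => φ (c * x + d)) ∧
    n (fun x => φ (c * x + d)) ≤ C * |c| ^ t * n φ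

/-- For a natural pseudo-norm `n = ∑ nᵢ` (each `nᵢ` purely natural of degree `tᵢ`), the
quantity `t_max(φ) = max {tᵢ : nᵢ(φ) > 0}` is the same for all indicators of nondegenerate
subintervals of `[0,1]`, and `n(1_Q)` is comparable to `|Q|^{-t_max}`. -/
theorem natural_norm_on_indicators
    {m : ℕ} (nn : Fin m → (ℝ → ℂ) → ℝ) (t : Fin m → ℝ)
    (hnat : ∀ i, PurelyNatural (nn i) (t i))
    (hnonneg : ∀ i φ, 0 ≤ nn i φ)
    (htri : ∀ i (φ ξ : ℝ → ℂ), nn i (φ + ξ) ≤ nn i φ + nn i ξ)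
    (hhom : ∀ i (c : ℂ) (φ : ℝ → ℂ), nn i (c • φ) = ‖c‖ * nn i φ)
    (hpos : 0 < ∑ i, nn i ((Icc (0:ℝ) 1).indicator fun _ => (1 : ℂ))) :
    ∃ (tm C1 : ℝ), 1 ≤ C1 ∧
      ∀ a b : ℝ, 0 ≤ a → a < b → b ≤ 1 →
        IsGreatest {r | ∃ i, t i = r ∧
          0 < nn i ((Icc a b).indicator fun _ => (1 : ℂ))} tm ∧
        (1 / C1) * (b - a) ^ (-tm) ≤ ∑ i, nn i ((Icc a b).indicator fun _ => (1 : ℂ)) ∧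
        ∑ i, nn i ((Icc a b).indicator fun _ => (1 : ℂ)) ≤ C1 * (b - a) ^ (-tm) := by
  classical
  set φ₀ : ℝ → ℂ := (Icc (0:ℝ) 1).indicator fun _ => (1 : ℂ) with hφ₀def
  choose C hCpos hC using hnat
  have hex : ∃ i : Fin m, 0 < nn i φ₀ := by
    by_contra h
    push_neg at h
    have h0 : ∑ i, nn i φ₀ = 0 :=
      Finset.sum_eq_zero fun i _ => le_antisymm (h i) (hnonneg i φ₀)
    rw [h0] at hpos
    exact lt_irrefl _ hpos
  obtain ⟨i₀, hi₀⟩ := hex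
  set s : Finset (Fin m) := Finset.univ.filter (fun i => 0 < nn i φ₀) with hs
  have hsne : s.Nonempty := ⟨i₀, by simp [hs, hi₀]⟩
  have himg : (s.image t).Nonempty := hsne.image t
  set tm := (s.image t).max' himg with htmdef
  obtain ⟨i₁, hi₁mem, hi₁⟩ := Finset.mem_image.mp ((s.image t).max'_mem himg)
  have hi₁pos : 0 < nn i₁ φ₀ := (Finset.mem_filter.mp hi₁mem).2
  set A := ∑ i, C i * nn i φ₀ with hAdef
  have hAnn : 0 ≤ A := Finset.sum_nonneg fun i _ =>
    mul_nonneg (hCpos i).le (hnonneg i φ₀)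
  set B := C i₁ / nn i₁ φ₀ with hBdef
  have hBpos : 0 < B := div_pos (hCpos i₁) hi₁pos
  set C1 := max 1 (max A B) with hC1def
  have hC1one : (1:ℝ) ≤ C1 := le_max_left _ _
  have hC1pos : 0 < C1 := lt_of_lt_of_le one_pos hC1one
  refine ⟨tm, C1, hC1one, ?_⟩
  intro a b ha hab hb1
  have hba : 0 < b - a := by linarith
  have hba1 : b - a ≤ 1 := by linarith
  set c : ℝ := (b-a)⁻¹ with hcdef
  set d : ℝ := -(a / (b-a)) with hddef
  have hcne : c ≠ 0 := inv_ne_zero (ne_of_gt hba)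
  have hcd : ∀ x : ℝ, c * x + d = (x - a) / (b - a) := by
    intro x
    rw [hcdef, hddef]
    field_simp
    ring
  have hmemiff : ∀ x : ℝ, c * x + d ∈ Icc (0:ℝ) 1 ↔ x ∈ Icc a b := by
    intro x
    rw [hcd, mem_Icc, mem_Icc, div_le_one hba, le_div_iff₀ hba]
    constructor <;> intro h <;> exact ⟨by linarith [h.1], by linarith [h.2]⟩
  have hcomp : (fun x => φ₀ (c * x + d)) = (Icc a b).indicator fun _ => (1 : ℂ) := by
    funext x
    by_cases hx : x ∈ Icc a b
    · rw [indicator_of_mem hx]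
      have h2 : c * x + d ∈ Icc (0:ℝ) 1 := (hmemiff x).mpr hx
      simp [hφ₀def, indicator_of_mem h2]
    · rw [indicator_of_notMem hx]
      have h2 : c * x + d ∉ Icc (0:ℝ) 1 := fun h => hx ((hmemiff x).mp h)
      simp [hφ₀def, indicator_of_notMem h2]
  set Q : ℝ → ℂ := (Icc a b).indicator fun _ => (1 : ℂ) with hQdef
  have hsupp : (Function.support fun x => φ₀ (c * x + d)) ⊆ Icc 0 1 := by
    rw [hcomp]
    exact (Set.support_indicator_subset).trans (Icc_subset_Icc ha hb1)
  have hpow : ∀ t' : ℝ, |c| ^ t' = (b - a) ^ (-t') := by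
    intro t'
    rw [hcdef, abs_of_pos (inv_pos.mpr hba), Real.inv_rpow hba.le,
      ← Real.rpow_neg hba.le]
  have hbd := fun i => hC i c d φ₀ hcne hsupp
  have hupp : ∀ i, nn i Q ≤ C i * (b - a) ^ (-(t i)) * nn i φ₀ := by
    intro i
    have h := (hbd i).2
    rw [hcomp, hpow (t i)] at h
    exact h
  have hlow : ∀ i, (1 / C i) * (b - a) ^ (-(t i)) * nn i φ₀ ≤ nn i Q := by
    intro i
    have h := (hbd i).1
    rw [hcomp, hpow (t i)] at h
    exact h
  have hzeroQ : ∀ i, nn i φ₀ = 0 → nn i Q = 0 := by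
    intro i h
    have h1 := hupp i
    rw [h, mul_zero] at h1
    exact le_antisymm h1 (hnonneg i Q)
  have hposQ : ∀ i, 0 < nn i φ₀ → 0 < nn i Q := by
    intro i h
    have h1 := hlow i
    have hCi := hCpos i
    have h2 : 0 < (1 / C i) * (b - a) ^ (-(t i)) * nn i φ₀ := by positivity
    linarith
  have hle_tm : ∀ i ∈ s, t i ≤ tm := fun i hi =>
    Finset.le_max' _ _ (Finset.mem_image_of_mem t hi)
  have hmono : ∀ i ∈ s, (b - a) ^ (-(t i)) ≤ (b - a) ^ (-tm) := by
    intro i hi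
    exact Real.rpow_le_rpow_of_exponent_ge hba hba1 (by linarith [hle_tm i hi])
  have hpow_nn : (0:ℝ) ≤ (b - a) ^ (-tm) := Real.rpow_nonneg hba.le _
  refine ⟨⟨⟨i₁, hi₁, hposQ i₁ hi₁pos⟩, ?_⟩, ?_, ?_⟩
  · rintro r ⟨i, rfl, hr⟩
    have hiφ : 0 < nn i φ₀ := by
      rcases lt_or_eq_of_le (hnonneg i φ₀) with h | h
      · exact h
      · exact absurd hr (by rw [hzeroQ i h.symm]; exact lt_irrefl 0)
    exact hle_tm i (Finset.mem_filter.mpr ⟨Finset.mem_univ i, hiφ⟩)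
  · -- lower bound
    have hstep : (1 / C1) * (b - a) ^ (-tm) ≤ nn i₁ Q := by
      have h1 : 1 / C1 ≤ 1 / B := one_div_le_one_div_of_le hBpos
        (le_trans (le_max_right A B) (le_max_right 1 _))
      have h2 : (1 / B) = (1 / C i₁) * nn i₁ φ₀ := by
        rw [hBdef]
        field_simp
      have h3 := hlow i₁
      rw [hi₁] at h3
      calc (1 / C1) * (b - a) ^ (-tm)
          ≤ (1 / B) * (b - a) ^ (-tm) := by
            exact mul_le_mul_of_nonneg_right h1 hpow_nn
        _ = (1 / C i₁) * (b - a) ^ (-tm) * nn i₁ φ₀ := by rw [h2]; ring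
        _ ≤ nn i₁ Q := h3
    exact hstep.trans (Finset.single_le_sum (fun i _ => hnonneg i Q) (Finset.mem_univ i₁))
  · -- upper bound
    have hterm : ∀ i ∈ Finset.univ, nn i Q ≤ C i * nn i φ₀ * (b - a) ^ (-tm) := by
      intro i _
      rcases lt_or_eq_of_le (hnonneg i φ₀) with h | h
      · have his : i ∈ s := Finset.mem_filter.mpr ⟨Finset.mem_univ i, h⟩
        have h1 := hupp i
        have h2 := hmono i his
        have hCi := (hCpos i).le
        calc nn i Q ≤ C i * (b - a) ^ (-(t i)) * nn i φ₀ := h1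
          _ ≤ C i * (b - a) ^ (-tm) * nn i φ₀ := by
              apply mul_le_mul_of_nonneg_right _ (hnonneg i φ₀)
              exact mul_le_mul_of_nonneg_left h2 hCi
          _ = C i * nn i φ₀ * (b - a) ^ (-tm) := by ring
      · rw [hzeroQ i h.symm, ← h]
        simp
    calc ∑ i, nn i Q ≤ ∑ i, C i * nn i φ₀ * (b - a) ^ (-tm) :=
        Finset.sum_le_sum hterm
      _ = A * (b - a) ^ (-tm) := by rw [hAdef, Finset.sum_mul]
      _ ≤ C1 * (b - a) ^ (-tm) :=
        mul_le_mul_of_nonneg_right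
          (le_trans (le_max_left A B) (le_max_right 1 _)) hpow_nn
end
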